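/- arXiv:2107.10033 — 3 statements merged into one kernel-verified Lean document; each statement's English description precedes it below -/
import Mathlib

section
/- Let n ≥ 1 and let A ⊆ ℕ be a crisp set, identified with the fuzzy set whose values lie in {0, 1}. Then A is n-c.e. in the classical sense (there is a computable f : ℕ × ℕ → {0,1} with f(x,0) = 0, lim_{s→∞} f(x,s) = A(x), and |{s : f(x,s) ≠ f(x,s+1)}| ≤ n for all x) if and only if A is fuzzy n-c.e. -/
open Filter

/-- The Σ-mind-change function of a sequence of rationals: starts at `1`,
flips to `-1` on a strict decrease while in increasing mode, and flips back
to `1` on a strict increase while in decreasing mode. -/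
def mSigma (g : ℕ → ℚ) : ℕ → ℤ
  | 0 => 1
  | s + 1 =>
      if mSigma g s = 1 then (if g s ≤ g (s + 1) then 1 else -1)
      else (if g (s + 1) ≤ g s then -1 else 1)

/-- A fuzzy set: a function `ℕ → ℝ` with values in `[0,1]`. -/
def IsFuzzySet (A : ℕ → ℝ) : Prop := ∀ x, 0 ≤ A x ∧ A x ≤ 1

/-- `f` is a Σ⁰₁-approximation of the fuzzy set `A`. -/
def SigmaApprox (f : ℕ → ℕ → ℚ) (A : ℕ → ℝ) : Prop :=
  Computable₂ f ∧ (∀ x s, 0 ≤ f x s ∧ f x s ≤ 1) ∧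
    (∀ x s, f x s ≤ f x (s + 1)) ∧
    (∀ x, Tendsto (fun s => (f x s : ℝ)) atTop (nhds (A x)))

/-- A fuzzy set is computably enumerable if it has a Σ⁰₁-approximation. -/
def FuzzyCE (A : ℕ → ℝ) : Prop := ∃ f : ℕ → ℕ → ℚ, SigmaApprox f A

/-- `f` is a Δ⁰₂-approximation of the fuzzy set `A`. -/
def DeltaApprox (f : ℕ → ℕ → ℚ) (A : ℕ → ℝ) : Prop :=
  Computable₂ f ∧ (∀ x s, 0 ≤ f x s ∧ f x s ≤ 1) ∧
    (∀ x, Tendsto (fun s => (f x s : ℝ)) atTop (nhds (A x)))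

/-- A fuzzy set `A` is `n`-c.e. if it has a Δ⁰₂-approximation which starts at `0`
and changes monotonicity at most `n - 1` times. -/
def FuzzyNCE (n : ℕ) (A : ℕ → ℝ) : Prop :=
  ∃ f : ℕ → ℕ → ℚ, DeltaApprox f A ∧ (∀ x, f x 0 = 0) ∧
    (∀ x, {s | mSigma (f x) (s + 1) ≠ mSigma (f x) s}.Finite ∧
      {s | mSigma (f x) (s + 1) ≠ mSigma (f x) s}.ncard ≤ n - 1)

/-- A crisp set `A ⊆ ℕ` is classically `n`-c.e.: it has a computable `{0,1}`-valued
approximation starting at `0`, converging to the characteristic function of `A`,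
with at most `n` changes. -/
def ClassicalNCE (n : ℕ) (A : Set ℕ) : Prop :=
  ∃ f : ℕ → ℕ → Bool, Computable₂ f ∧ (∀ x, f x 0 = false) ∧
    (∀ x, ∀ᶠ s in atTop, (f x s = true ↔ x ∈ A)) ∧
    (∀ x, {s | f x s ≠ f x (s + 1)}.Finite ∧ {s | f x s ≠ f x (s + 1)}.ncard ≤ n)

/-!
Read a `{0,1}`-valued approximation `b` as the rational approximation `s ↦ [b s]`, and a rational
approximation `g` through its threshold `s ↦ [1/2 ≤ g s]`. A switch of the threshold is a strict
increase or decrease of `g`, so it puts the Σ-mind-change function into the matching mode; as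
consecutive switches go in opposite directions, the mode changes in between, whence
`#switches ≤ #mode changes + 1`. Conversely, for `g = [b]` with `b 0 = 0` the mode changes exactly
at the switches of `b` except the first one, an increase made in the initial mode.

Thresholding is computable on `ℚ` because the codes `⟪num, den⟫` of rationals form a primitive
recursive set, which `ℚ`'s `Primcodable` instance enumerates in increasing order.
-/

open Encodable

theorem Set.finite_and_ncard_le_iff_forall_count_le {p : ℕ → Prop} [DecidablePred p] {C : ℕ} :
    {s | p s}.Finite ∧ {s | p s}.ncard ≤ C ↔ ∀ N, Nat.count p N ≤ C := by
  constructor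
  · rintro ⟨hfin, hC⟩ N
    calc Nat.count p N ≤ hfin.toFinset.card := Nat.count_le_card hfin N
      _ = {s | p s}.ncard := (Set.ncard_eq_toFinset_card _ hfin).symm
      _ ≤ C := hC
  · intro h
    have hfin : {s | p s}.Finite := by
      by_contra hinf
      have h' := h (Nat.nth p C + 1)
      rw [Nat.count_succ, Nat.count_nth_of_infinite hinf,
        if_pos (Nat.nth_mem_of_infinite hinf C)] at h'
      omega
    obtain ⟨N, hN⟩ := hfin.bddAbove
    refine ⟨hfin, le_trans ?_ (h (N + 1))⟩
    rw [Nat.count_eq_card_filter_range, ← Set.ncard_coe_finset]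
    exact Set.ncard_le_ncard (fun s hs => by simpa [Nat.lt_succ_iff] using ⟨hN hs, hs⟩)
      (Finset.finite_toSet _)

section Switches

variable (u v : ℕ → Bool)

/-- Between two switches of `u`, which go in opposite directions, `v` has to switch too. -/
theorem count_switch_le_count_switch_add_one (h : ∀ s, u s ≠ u (s + 1) → v (s + 1) = u (s + 1))
    (N : ℕ) :
    Nat.count (fun s => u s ≠ u (s + 1)) N ≤ Nat.count (fun s => v s ≠ v (s + 1)) N + 1 := by
  suffices ∀ N, Nat.count (fun s => u s ≠ u (s + 1)) N ≤
      Nat.count (fun s => v s ≠ v (s + 1)) N + if v N = u N then 1 else 0 by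
    exact (this N).trans (by split <;> omega)
  intro N
  induction N with
  | zero => simp
  | succ N ih =>
    have hN := h N
    rw [Nat.count_succ, Nat.count_succ]
    revert ih hN
    cases u N <;> cases u (N + 1) <;> cases v N <;> cases v (N + 1) <;> simp <;> omega

/-- After the first switch of `u`, `v` agrees with `u` for good; the first switch itself does not
move `v`, since it takes `u` to the value `v` started with. -/
theorem count_switch_le_count_switch_sub_one (h : ∀ s, u s ≠ u (s + 1) → v (s + 1) = u (s + 1))
    (hv : ∀ s, v s ≠ v (s + 1) → u s ≠ u (s + 1)) (h0 : v 0 ≠ u 0) (N : ℕ) :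
    Nat.count (fun s => v s ≠ v (s + 1)) N ≤ Nat.count (fun s => u s ≠ u (s + 1)) N - 1 := by
  suffices ∀ N, (Nat.count (fun s => u s ≠ u (s + 1)) N = 0 ∧
      Nat.count (fun s => v s ≠ v (s + 1)) N = 0 ∧ v N ≠ u N) ∨
      (Nat.count (fun s => v s ≠ v (s + 1)) N + 1 ≤ Nat.count (fun s => u s ≠ u (s + 1)) N ∧
        v N = u N) by
    rcases this N with h | h <;> omega
  intro N
  induction N with
  | zero => simpa using h0
  | succ N ih =>
    have hN := h N
    have hvN := hv N
    rw [Nat.count_succ, Nat.count_succ]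
    revert ih hN hvN
    cases u N <;> cases u (N + 1) <;> cases v N <;> cases v (N + 1) <;> simp <;> omega

end Switches

section MindChange

def mSigmaUp (g : ℕ → ℚ) (s : ℕ) : Bool := decide (mSigma g s = 1)

variable {g : ℕ → ℚ} {s : ℕ}

theorem mSigma_eq_one_or_eq_neg_one (g : ℕ → ℚ) (s : ℕ) : mSigma g s = 1 ∨ mSigma g s = -1 := by
  cases s with
  | zero => exact Or.inl rfl
  | succ s => rw [mSigma]; split <;> split <;> simp

theorem mSigma_succ_ne_iff :
    mSigma g (s + 1) ≠ mSigma g s ↔ mSigmaUp g s ≠ mSigmaUp g (s + 1) := by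
  unfold mSigmaUp
  rcases mSigma_eq_one_or_eq_neg_one g s with h | h <;>
    rcases mSigma_eq_one_or_eq_neg_one g (s + 1) with h' | h' <;> simp [h, h']

theorem mSigmaUp_succ_of_eq (h : g (s + 1) = g s) : mSigmaUp g (s + 1) = mSigmaUp g s := by
  unfold mSigmaUp
  rw [mSigma]
  rcases mSigma_eq_one_or_eq_neg_one g s with hm | hm <;> simp [hm, h]

/-- Crossing a threshold upwards (downwards) is a strict increase (decrease). -/
theorem mSigmaUp_succ_of_cross (c : ℚ) (h : decide (c ≤ g s) ≠ decide (c ≤ g (s + 1))) :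
    mSigmaUp g (s + 1) = decide (c ≤ g (s + 1)) := by
  unfold mSigmaUp
  rw [mSigma]
  by_cases hs : c ≤ g s <;> by_cases hs' : c ≤ g (s + 1)
  · simp [hs, hs'] at h
  · have hlt : g (s + 1) < g s := by linarith
    rcases mSigma_eq_one_or_eq_neg_one g s with hm | hm <;> simp [hs', hm, hlt.le, hlt.not_ge]
  · have hlt : g s < g (s + 1) := by linarith
    rcases mSigma_eq_one_or_eq_neg_one g s with hm | hm <;> simp [hs', hm, hlt.le, hlt.not_ge]
  · simp [hs, hs'] at h

theorem mSigma_switches_eq (g : ℕ → ℚ) :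
    {s | mSigma g (s + 1) ≠ mSigma g s} = {s | mSigmaUp g s ≠ mSigmaUp g (s + 1)} :=
  Set.ext fun _ => mSigma_succ_ne_iff

end MindChange

theorem mSigma_switches_of_bool_switches {g : ℕ → ℚ} {b : ℕ → Bool}
    (hg : ∀ s, g s = bif b s then 1 else 0) (hb0 : b 0 = false) {n : ℕ}
    (hb : {s | b s ≠ b (s + 1)}.Finite ∧ {s | b s ≠ b (s + 1)}.ncard ≤ n) :
    {s | mSigma g (s + 1) ≠ mSigma g s}.Finite ∧
      {s | mSigma g (s + 1) ≠ mSigma g s}.ncard ≤ n - 1 := by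
  have hb_eq : ∀ s, decide (1 ≤ g s) = b s := fun s => by cases hs : b s <;> simp [hg, hs]
  rw [Set.finite_and_ncard_le_iff_forall_count_le] at hb
  rw [mSigma_switches_eq, Set.finite_and_ncard_le_iff_forall_count_le]
  intro N
  refine (count_switch_le_count_switch_sub_one b (mSigmaUp g) (fun s hs => ?_) (fun s hs => ?_)
    (by simp [mSigmaUp, mSigma, hb0]) N).trans (Nat.sub_le_sub_right (hb N) 1)
  · simp only [← hb_eq] at hs ⊢
    exact mSigmaUp_succ_of_cross 1 hs
  · contrapose! hs
    exact (mSigmaUp_succ_of_eq (by simp [hg, hs])).symm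

theorem threshold_switches_of_mSigma_switches (g : ℕ → ℚ) (c : ℚ) {m : ℕ}
    (hg : {s | mSigma g (s + 1) ≠ mSigma g s}.Finite ∧
      {s | mSigma g (s + 1) ≠ mSigma g s}.ncard ≤ m) :
    {s | decide (c ≤ g s) ≠ decide (c ≤ g (s + 1))}.Finite ∧
      {s | decide (c ≤ g s) ≠ decide (c ≤ g (s + 1))}.ncard ≤ m + 1 := by
  rw [mSigma_switches_eq, Set.finite_and_ncard_le_iff_forall_count_le] at hg
  rw [Set.finite_and_ncard_le_iff_forall_count_le]
  exact fun N => (count_switch_le_count_switch_add_one _ (mSigmaUp g)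
    (fun s hs => mSigmaUp_succ_of_cross c hs) N).trans (Nat.add_le_add_right (hg N) 1)

theorem tendsto_bif_indicator {b : ℕ → Bool} {A : Set ℕ} {x : ℕ}
    (h : ∀ᶠ s in atTop, (b s = true ↔ x ∈ A)) :
    Tendsto (fun s => ((bif b s then 1 else 0 : ℚ) : ℝ)) atTop
      (nhds (A.indicator (fun _ => 1) x)) := by
  refine tendsto_const_nhds.congr' (h.mono fun s hs => ?_)
  by_cases hx : x ∈ A <;> cases hb : b s <;> simp_all

theorem eventually_one_half_le_iff_of_tendsto_indicator {g : ℕ → ℚ} {A : Set ℕ} {x : ℕ}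
    (h : Tendsto (fun s => (g s : ℝ)) atTop (nhds (A.indicator (fun _ => 1) x))) :
    ∀ᶠ s in atTop, (decide (1 / 2 ≤ g s) = true ↔ x ∈ A) := by
  by_cases hx : x ∈ A
  · rw [Set.indicator_of_mem hx] at h
    filter_upwards [h.eventually (eventually_gt_nhds (by norm_num : (1 / 2 : ℝ) < 1))] with s hs
    have : (1 / 2 : ℚ) ≤ g s := by exact_mod_cast (by linarith : ((1 / 2 : ℚ) : ℝ) ≤ g s)
    simpa [hx] using this
  · rw [Set.indicator_of_notMem hx] at h
    filter_upwards [h.eventually (eventually_lt_nhds (by norm_num : (0 : ℝ) < 1 / 2))] with s hs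
    have : g s < 1 / 2 := by exact_mod_cast (by linarith : (g s : ℝ) < ((1 / 2 : ℚ) : ℝ))
    simpa [hx] using this

theorem Nat.gcd_eq_findGreatest_dvd (a b : ℕ) :
    Nat.gcd a b = Nat.findGreatest (fun d => d ∣ a ∧ d ∣ b) (a + b) := by
  symm
  rw [Nat.findGreatest_eq_iff]
  refine ⟨?_, fun _ => ⟨Nat.gcd_dvd_left a b, Nat.gcd_dvd_right a b⟩, ?_⟩
  · rcases Nat.eq_zero_or_pos a with rfl | ha
    · simp
    · exact (Nat.gcd_le_left b ha).trans (Nat.le_add_right a b)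
  · rintro d hlt hle ⟨hda, hdb⟩
    have hpos : 0 < Nat.gcd a b := Nat.pos_of_ne_zero fun h0 => by
      rw [Nat.gcd_eq_zero_iff] at h0
      omega
    exact hlt.not_ge (Nat.le_of_dvd hpos (Nat.dvd_gcd hda hdb))

theorem Primrec.nat_gcd : Primrec₂ Nat.gcd := by
  have hdvd : PrimrecRel fun (p : ℕ × ℕ) (d : ℕ) => d ∣ p.1 ∧ d ∣ p.2 := by
    refine PrimrecRel.of_eq (r := fun p d => p.1 % d = 0 ∧ p.2 % d = 0) (PrimrecPred.and ?_ ?_)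
      fun p d => by simp only [Nat.dvd_iff_mod_eq_zero]
    · exact Primrec.eq.comp (Primrec.nat_mod.comp (Primrec.fst.comp Primrec.fst) Primrec.snd)
        (Primrec.const 0)
    · exact Primrec.eq.comp (Primrec.nat_mod.comp (Primrec.snd.comp Primrec.fst) Primrec.snd)
        (Primrec.const 0)
  exact (Primrec.nat_findGreatest (Primrec.nat_add.comp Primrec.fst Primrec.snd) hdvd).of_eq
    fun p => (Nat.gcd_eq_findGreatest_dvd p.1 p.2).symm

theorem Primrec.nat_count {p : ℕ → Prop} [DecidablePred p] (hp : PrimrecPred p) :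
    Primrec (Nat.count p) :=
  (Primrec.list_length.comp ((Primrec.listFilter hp).comp Primrec.list_range)).of_eq
    fun n => by simp [Nat.count, List.countP_eq_length_filter]

theorem Computable.nat_nth {p : ℕ → Prop} [DecidablePred p] (hp : PrimrecPred p)
    (hinf : (Set.ofPred p).Infinite) : Computable (Nat.nth p) := by
  have hsearch : Computable₂ fun n k => decide (p k ∧ Nat.count p k = n) :=
    (PrimrecPred.and (hp.comp Primrec.snd)
      (Primrec.eq.comp ((Primrec.nat_count hp).comp Primrec.snd) Primrec.fst)).decide.to_comp
  refine Partrec.of_eq_tot (Partrec.rfind hsearch.partrec₂) fun n => Nat.mem_rfind.2 ⟨?_, ?_⟩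
  · simp [Nat.nth_mem_of_infinite hinf, Nat.count_nth_of_infinite hinf]
  · intro k hk
    refine Part.mem_some_iff.2 (decide_eq_false fun ⟨hpk, hcount⟩ => ?_).symm
    exact (Nat.count_strict_mono hpk hk).ne (by rw [hcount, Nat.count_nth_of_infinite hinf])

namespace Rat

theorem encode_eq_pair (q : ℚ) : encode q = Nat.pair (Equiv.intEquivNat q.num) q.den := rfl

theorem intEquivNat_div_two_add_mod_two (a : ℤ) :
    Equiv.intEquivNat a / 2 + Equiv.intEquivNat a % 2 = a.natAbs := by
  cases a with
  | ofNat m => change 2 * m / 2 + 2 * m % 2 = m; omega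
  | negSucc m => change (2 * m + 1) / 2 + (2 * m + 1) % 2 = m + 1; omega

theorem mem_range_encode_iff (k : ℕ) :
    k ∈ Set.range (encode : ℚ → ℕ) ↔
      0 < k.unpair.2 ∧ Nat.Coprime (k.unpair.1 / 2 + k.unpair.1 % 2) k.unpair.2 := by
  constructor
  · rintro ⟨q, rfl⟩
    rw [encode_eq_pair, Nat.unpair_pair, intEquivNat_div_two_add_mod_two]
    exact ⟨q.den_pos, q.reduced⟩
  · rintro ⟨hden, hcop⟩
    set a := Equiv.intEquivNat.symm k.unpair.1
    have ha : Equiv.intEquivNat a = k.unpair.1 := Equiv.apply_symm_apply _ _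
    rw [← ha, intEquivNat_div_two_add_mod_two] at hcop
    refine ⟨Rat.mk' a k.unpair.2 hden.ne' hcop, ?_⟩
    rw [encode_eq_pair]
    change Nat.pair (Equiv.intEquivNat a) k.unpair.2 = k
    rw [ha, Nat.pair_unpair]

theorem primrecPred_mem_range_encode : PrimrecPred (· ∈ Set.range (encode : ℚ → ℕ)) := by
  refine PrimrecPred.of_eq (PrimrecPred.and ?_ ?_) fun k => (mem_range_encode_iff k).symm
  · exact Primrec.nat_lt.comp (Primrec.const 0) (Primrec.snd.comp Primrec.unpair)
  · have hcode : Primrec fun k : ℕ => k.unpair.1 / 2 + k.unpair.1 % 2 :=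
      Primrec.nat_add.comp
        (Primrec.nat_div.comp (Primrec.fst.comp Primrec.unpair) (Primrec.const 2))
        (Primrec.nat_mod.comp (Primrec.fst.comp Primrec.unpair) (Primrec.const 2))
    exact Primrec.eq.comp (Primrec.nat_gcd.comp hcode (Primrec.snd.comp Primrec.unpair))
      (Primrec.const 1)

theorem one_half_le_iff_encode (q : ℚ) :
    1 / 2 ≤ q ↔ (encode q).unpair.1 % 2 = 0 ∧ (encode q).unpair.2 ≤ (encode q).unpair.1 := by
  have hden : 0 < q.den := q.den_pos
  have hnum : 1 / 2 ≤ q ↔ (q.den : ℤ) ≤ 2 * q.num := by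
    conv_lhs => rw [← Rat.num_div_den q]
    rw [le_div_iff₀ (by exact_mod_cast hden)]
    constructor <;> intro h
    · have : ((q.den : ℤ) : ℚ) ≤ 2 * q.num := by push_cast; linarith
      exact_mod_cast this
    · have : ((q.den : ℤ) : ℚ) ≤ 2 * q.num := by exact_mod_cast h
      push_cast at this
      linarith
  rw [hnum, encode_eq_pair, Nat.unpair_pair]
  cases hq : q.num with
  | ofNat m => change _ ↔ 2 * m % 2 = 0 ∧ q.den ≤ 2 * m; rw [Int.ofNat_eq_natCast]; omega
  | negSucc m => change _ ↔ (2 * m + 1) % 2 = 0 ∧ q.den ≤ 2 * m + 1; rw [Int.negSucc_eq]; omega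

/-- `ℚ` carries two encodings: the `Encodable` one, `encode q = ⟪num, den⟫`, and the one of its
`Primcodable` instance (the one `Computable` refers to), which numbers the former codes
consecutively. -/
theorem computable_decide_one_half_le : Computable fun q : ℚ => decide (1 / 2 ≤ q) := by
  classical
  have hhalf : PrimrecPred fun k : ℕ => k.unpair.1 % 2 = 0 ∧ k.unpair.2 ≤ k.unpair.1 :=
    PrimrecPred.and
      (Primrec.eq.comp (Primrec.nat_mod.comp (Primrec.fst.comp Primrec.unpair) (Primrec.const 2))
        (Primrec.const 0))
      (Primrec.nat_le.comp (Primrec.snd.comp Primrec.unpair) (Primrec.fst.comp Primrec.unpair))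
  have hinf : (Set.range (encode : ℚ → ℕ)).Infinite :=
    Set.infinite_range_of_injective encode_injective
  refine (hhalf.decide.to_comp.comp ((Computable.nat_nth primrecPred_mem_range_encode hinf).comp
    Computable.encode)).of_eq fun q => ?_
  have hcount : Nat.nth (· ∈ Set.range (encode : ℚ → ℕ)) (@encode ℚ Primcodable.toEncodable q) =
      encode q := @Nat.nth_count _ (decidableRangeEncode ℚ) _ ⟨q, rfl⟩
  simp only [hcount, one_half_le_iff_encode]

end Rat

/-- A crisp set is classically `n`-c.e. iff (identified with the fuzzy set given by
its indicator function) it is fuzzy `n`-c.e. -/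
theorem crisp_classical_nce_iff_fuzzy_nce (n : ℕ) (hn : 1 ≤ n) (A : Set ℕ) :
    ClassicalNCE n A ↔ FuzzyNCE n (A.indicator fun _ => (1 : ℝ)) := by
  constructor
  · rintro ⟨f, hcomp, h0, hlim, hswitch⟩
    refine ⟨fun x s => bif f x s then 1 else 0, ⟨?_, fun x s => ?_, fun x => ?_⟩, fun x => ?_,
      fun x => mSigma_switches_of_bool_switches (fun s => rfl) (h0 x) (hswitch x)⟩
    · exact Computable.cond hcomp (Computable.const 1) (Computable.const 0)
    · cases hb : f x s <;> simp [hb]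
    · exact tendsto_bif_indicator (hlim x)
    · simp [h0 x]
  · rintro ⟨f, ⟨hcomp, -, hlim⟩, h0, hswitch⟩
    refine ⟨fun x s => decide (1 / 2 ≤ f x s), Rat.computable_decide_one_half_le.comp hcomp,
      fun x => by simp [h0 x], fun x => eventually_one_half_le_iff_of_tendsto_indicator (hlim x),
      fun x => ?_⟩
    simpa only [Nat.sub_add_cancel hn] using
      threshold_switches_of_mSigma_switches (f x) (1 / 2) (hswitch x)
end

section
/- Let k ∈ ℕ and let a₁, …, a_{k+1} and b₁, …, b_k be nondecreasing sequences of rationals in [0,1] (functions ℕ → ℚ ∩ [0,1] with a_i(s+1) ≥ a_i(s) and b_i(s+1) ≥ b_i(s) for all s). Define d(s) = max{ max_{1≤i≤k} min(a_i(s), 1 − b_i(s)), a_{k+1}(s) }. Then the sequence d changes monotonicity at most 2k times: |{s ∈ ℕ : m^d_Σ(s+1) ≠ m^d_Σ(s)}| ≤ 2k. -/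
open Filter

/-- If `a 1, …, a (k+1)` and `b 1, …, b k` are nondecreasing sequences of rationals
in `[0,1]`, then the sequence `d s = max (max_{i ≤ k} min (a i s) (1 - b i s)) (a (k+1) s)`
changes monotonicity at most `2k` times. -/
theorem mind_changes_of_boolean_combination_odd (k : ℕ)
    (a : Fin (k + 1) → ℕ → ℚ) (b : Fin k → ℕ → ℚ)
    (ha01 : ∀ i s, 0 ≤ a i s ∧ a i s ≤ 1) (hb01 : ∀ i s, 0 ≤ b i s ∧ b i s ≤ 1)
    (hamono : ∀ i s, a i s ≤ a i (s + 1)) (hbmono : ∀ i s, b i s ≤ b i (s + 1))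
    (d : ℕ → ℚ)
    (hd : ∀ s, d s = (Finset.univ : Finset (Fin (k + 1))).sup' Finset.univ_nonempty
      (fun i => if h : (i : ℕ) < k then min (a i s) (1 - b ⟨i, h⟩ s) else a i s)) :
    {s | mSigma d (s + 1) ≠ mSigma d s}.Finite ∧
      {s | mSigma d (s + 1) ≠ mSigma d s}.ncard ≤ 2 * k := by
  classical
  set c : Fin (k + 1) → ℕ → ℚ :=
    fun i s => if h : (i : ℕ) < k then min (a i s) (1 - b ⟨i, h⟩ s) else a i s with hc
  have F1 : ∀ (i : Fin (k + 1)) s, c i s ≤ d s := by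
    intro i s
    rw [hd s]
    exact Finset.le_sup' (fun j : Fin (k + 1) => c j s) (Finset.mem_univ i)
  have F2 : ∀ s, ∃ i, c i s = d s := by
    intro s
    obtain ⟨i, -, h⟩ := Finset.exists_mem_eq_sup' (Finset.univ_nonempty)
      (fun i : Fin (k + 1) => c i s)
    exact ⟨i, by rw [hd s]; exact h.symm⟩
  have hca : ∀ (i : Fin (k + 1)) s, c i s ≤ a i s := by
    intro i s
    simp only [hc]
    split
    · exact min_le_left _ _
    · exact le_rfl
  -- the "phase" predicate and its properties
  have hPhmono : ∀ (i : Fin (k + 1)) s, (∃ h : (i : ℕ) < k, 1 - b ⟨i, h⟩ s < a i s) →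
      (∃ h : (i : ℕ) < k, 1 - b ⟨i, h⟩ (s + 1) < a i (s + 1)) := by
    rintro i s ⟨h, hlt⟩
    refine ⟨h, ?_⟩
    have h1 := hbmono ⟨i, h⟩ s
    have h2 := hamono i s
    linarith
  have hPhstep : ∀ (i : Fin (k + 1)) s, (∃ h : (i : ℕ) < k, 1 - b ⟨i, h⟩ s < a i s) →
      c i (s + 1) ≤ c i s := by
    rintro i s ⟨h, hlt⟩
    obtain ⟨h', hlt'⟩ := hPhmono i s ⟨h, hlt⟩
    have e1 : c i s = 1 - b ⟨i, h⟩ s := by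
      simp only [hc]; rw [dif_pos h]; exact min_eq_right hlt.le
    have e2 : c i (s + 1) = 1 - b ⟨i, h⟩ (s + 1) := by
      simp only [hc]; rw [dif_pos h]; exact min_eq_right hlt'.le
    rw [e1, e2]
    have := hbmono ⟨i, h⟩ s
    linarith
  have hcdec : ∀ (i : Fin (k + 1)) s, c i (s + 1) < c i s →
      (∃ h : (i : ℕ) < k, 1 - b ⟨i, h⟩ (s + 1) < a i (s + 1)) := by
    intro i s hlt
    by_cases h : (i : ℕ) < k
    · refine ⟨h, ?_⟩
      have h1 : c i s ≤ a i (s + 1) := (hca i s).trans (hamono i s)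
      have h2 : c i (s + 1) = min (a i (s + 1)) (1 - b ⟨i, h⟩ (s + 1)) := by
        simp only [hc]; rw [dif_pos h]
      rw [h2] at hlt
      rcases min_lt_iff.1 (hlt.trans_le h1) with h3 | h3
      · exact absurd h3 (lt_irrefl _)
      · exact h3
    · have e1 : c i s = a i s := by simp only [hc]; rw [dif_neg h]
      have e2 : c i (s + 1) = a i (s + 1) := by simp only [hc]; rw [dif_neg h]
      rw [e1, e2] at hlt
      exact absurd hlt (not_lt.2 (hamono i s))
  have hant : ∀ (i : Fin (k + 1)) s t, s ≤ t →
      (∃ h : (i : ℕ) < k, 1 - b ⟨i, h⟩ s < a i s) →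
      (∃ h : (i : ℕ) < k, 1 - b ⟨i, h⟩ t < a i t) ∧ c i t ≤ c i s := by
    intro i s t hst hp
    induction t, hst using Nat.le_induction with
    | base => exact ⟨hp, le_rfl⟩
    | succ t ht ih =>
      obtain ⟨hpt, hct⟩ := ih
      exact ⟨hPhmono i t hpt, (hPhstep i t hpt).trans hct⟩
  -- basic facts about mSigma
  have mcases : ∀ (g : ℕ → ℚ) s, mSigma g s = 1 ∨ mSigma g s = -1 := by
    intro g s
    cases s with
    | zero => left; rfl
    | succ n => rw [mSigma]; split_ifs <;> simp
  have mdown : ∀ (g : ℕ → ℚ) s, mSigma g s = 1 → mSigma g (s + 1) ≠ 1 →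
      g (s + 1) < g s := by
    intro g s h1 h2
    by_contra h
    push_neg at h
    rw [mSigma, if_pos h1, if_pos h] at h2
    exact h2 rfl
  have mup : ∀ (g : ℕ → ℚ) s, mSigma g s = -1 → mSigma g (s + 1) ≠ -1 →
      g s < g (s + 1) := by
    intro g s h1 h2
    by_contra h
    push_neg at h
    rw [mSigma, if_neg (by rw [h1]; decide), if_pos h] at h2
    exact h2 rfl
  have mstay : ∀ (g : ℕ → ℚ) s, mSigma g s = 1 → mSigma g (s + 1) = 1 →
      g s ≤ g (s + 1) := by
    intro g s h1 h2
    by_contra h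
    push_neg at h
    rw [mSigma, if_pos h1, if_neg (not_le.2 h)] at h2
    exact absurd h2 (by decide)
  -- the down-flip and up-flip sets
  have hDm1 : ∀ s ∈ {s | mSigma d s = 1 ∧ mSigma d (s + 1) ≠ mSigma d s},
      mSigma d (s + 1) = -1 := by
    intro s hs
    rcases mcases d (s + 1) with h | h
    · exact absurd (by rw [h, hs.1]) hs.2
    · exact h
  have hUm1 : ∀ s ∈ {s | mSigma d s = -1 ∧ mSigma d (s + 1) ≠ mSigma d s},
      mSigma d (s + 1) = 1 := by
    intro s hs
    rcases mcases d (s + 1) with h | h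
    · exact h
    · exact absurd (by rw [h, hs.1]) hs.2
  have hDdec : ∀ s ∈ {s | mSigma d s = 1 ∧ mSigma d (s + 1) ≠ mSigma d s},
      d (s + 1) < d s := by
    intro s hs
    exact mdown d s hs.1 (by rw [hDm1 s hs]; decide)
  have hUinc : ∀ s ∈ {s | mSigma d s = -1 ∧ mSigma d (s + 1) ≠ mSigma d s},
      d s < d (s + 1) := by
    intro s hs
    exact mup d s hs.1 (by rw [hUm1 s hs]; decide)
  -- choose an argmax for each stage
  choose f hf using F2
  have hfD : ∀ s ∈ {s | mSigma d s = 1 ∧ mSigma d (s + 1) ≠ mSigma d s},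
      ∃ h : ((f s : ℕ)) < k, 1 - b ⟨(f s : ℕ), h⟩ (s + 1) < a (f s) (s + 1) := by
    intro s hs
    have : c (f s) (s + 1) < c (f s) s := by
      calc c (f s) (s + 1) ≤ d (s + 1) := F1 _ _
        _ < d s := hDdec s hs
        _ = c (f s) s := (hf s).symm
    exact hcdec (f s) s this
  -- injectivity of the argmax assignment on down flips
  have key : ∀ s₁ ∈ {s | mSigma d s = 1 ∧ mSigma d (s + 1) ≠ mSigma d s},
      ∀ s₂ ∈ {s | mSigma d s = 1 ∧ mSigma d (s + 1) ≠ mSigma d s},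
      s₁ < s₂ → f s₁ ≠ f s₂ := by
    intro s₁ hs₁ s₂ hs₂ hlt heq
    have hPh1 := hfD s₁ hs₁
    have hm1 : mSigma d (s₁ + 1) = -1 := hDm1 s₁ hs₁
    have hs12 : s₁ + 1 < s₂ := by
      rcases lt_or_eq_of_le (Nat.succ_le_of_lt hlt) with h | h
      · exact h
      · exfalso
        have h' : s₁ + 1 = s₂ := h
        rw [h', hs₂.1] at hm1
        exact absurd hm1 (by decide)
    set P : ℕ → Prop := fun t => s₁ < t ∧ mSigma d t = -1 with hP
    set t := Nat.findGreatest P (s₂ - 1) with htdef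
    have hP1 : P (s₁ + 1) := ⟨Nat.lt_succ_self s₁, hm1⟩
    have hPt : P t := Nat.findGreatest_spec (by omega) hP1
    have htle : t ≤ s₂ - 1 := Nat.findGreatest_le _
    have ht1 : mSigma d (t + 1) = 1 := by
      rcases lt_or_eq_of_le (show t + 1 ≤ s₂ by omega) with h | h
      · have hng := Nat.findGreatest_is_greatest (show t < t + 1 by omega)
          (show t + 1 ≤ s₂ - 1 by omega)
        rcases mcases d (t + 1) with h1 | h1
        · exact h1
        · exact absurd ⟨by omega, h1⟩ hng
      · rw [h]; exact hs₂.1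
    have hdt : d t < d (t + 1) := mup d t hPt.2 (by rw [ht1]; decide)
    have hchain : ∀ u, t + 1 ≤ u → u ≤ s₂ → mSigma d u = 1 ∧ d (t + 1) ≤ d u := by
      intro u hu
      induction u, hu using Nat.le_induction with
      | base => intro _; exact ⟨ht1, le_rfl⟩
      | succ u hu ih =>
        intro hus2
        obtain ⟨hm, hdle⟩ := ih (by omega)
        have hm1' : mSigma d (u + 1) = 1 := by
          rcases lt_or_eq_of_le hus2 with h | h
          · have hng := Nat.findGreatest_is_greatest (show t < u + 1 by omega)
              (show u + 1 ≤ s₂ - 1 by omega)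
            rcases mcases d (u + 1) with h1 | h1
            · exact h1
            · exact absurd ⟨show s₁ < u + 1 by omega, h1⟩ hng
          · rw [h]; exact hs₂.1
        exact ⟨hm1', hdle.trans (mstay d u hm hm1')⟩
    obtain ⟨-, hd2⟩ := hchain s₂ (by omega) le_rfl
    have hPht := (hant (f s₁) (s₁ + 1) t (by omega) hPh1).1
    have h1 : c (f s₁) s₂ ≤ c (f s₁) t := (hant (f s₁) t s₂ (by omega) hPht).2
    have h2 : d s₂ ≤ d t := by
      calc d s₂ = c (f s₂) s₂ := (hf s₂).symm
        _ = c (f s₁) s₂ := by rw [heq]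
        _ ≤ c (f s₁) t := h1
        _ ≤ d t := F1 _ _
    linarith
  have hinjOn : Set.InjOn (fun s => ((f s : ℕ)))
      {s | mSigma d s = 1 ∧ mSigma d (s + 1) ≠ mSigma d s} := by
    intro x hx y hy hxy
    by_contra hne
    rcases Nat.lt_or_ge x y with h | h
    · exact key x hx y hy h (Fin.val_injective hxy)
    · exact key y hy x hx (lt_of_le_of_ne h (Ne.symm hne)) (Fin.val_injective hxy.symm)
  have himg : (fun s => ((f s : ℕ))) ''
      {s | mSigma d s = 1 ∧ mSigma d (s + 1) ≠ mSigma d s} ⊆ ↑(Finset.range k) := by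
    rintro x ⟨s, hs, rfl⟩
    obtain ⟨h, -⟩ := hfD s hs
    simp [Finset.mem_range]
    exact h
  have hDfin : ({s | mSigma d s = 1 ∧ mSigma d (s + 1) ≠ mSigma d s} : Set ℕ).Finite :=
    Set.Finite.of_finite_image (((Finset.range k).finite_toSet).subset himg) hinjOn
  have hDcard : ({s | mSigma d s = 1 ∧ mSigma d (s + 1) ≠ mSigma d s} : Set ℕ).ncard ≤ k := by
    rw [← Set.ncard_image_of_injOn hinjOn]
    calc ((fun s => ((f s : ℕ))) ''
        {s | mSigma d s = 1 ∧ mSigma d (s + 1) ≠ mSigma d s}).ncard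
        ≤ (↑(Finset.range k) : Set ℕ).ncard :=
          Set.ncard_le_ncard himg ((Finset.range k).finite_toSet)
      _ = k := by rw [Set.ncard_coe_finset, Finset.card_range]
  -- map each up flip to the preceding down flip
  set ψ : ℕ → ℕ := fun u => Nat.findGreatest (fun t => mSigma d t = 1) u with hψdef
  have hψ1 : ∀ u ∈ {s | mSigma d s = -1 ∧ mSigma d (s + 1) ≠ mSigma d s},
      mSigma d (ψ u) = 1 := by
    intro u hu
    exact Nat.findGreatest_spec (P := fun t => mSigma d t = 1) (Nat.zero_le u)
      (show mSigma d 0 = 1 from rfl)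
  have hψlt : ∀ u ∈ {s | mSigma d s = -1 ∧ mSigma d (s + 1) ≠ mSigma d s}, ψ u < u := by
    intro u hu
    rcases lt_or_eq_of_le (Nat.findGreatest_le u : ψ u ≤ u) with h | h
    · exact h
    · exfalso
      have h2 : ψ u = u := h
      have := hψ1 u hu
      rw [h2, hu.1] at this
      exact absurd this (by decide)
  have hψD : ∀ u ∈ {s | mSigma d s = -1 ∧ mSigma d (s + 1) ≠ mSigma d s},
      ψ u ∈ {s | mSigma d s = 1 ∧ mSigma d (s + 1) ≠ mSigma d s} := by
    intro u hu
    have h1 := hψ1 u hu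
    have h2 : mSigma d (ψ u + 1) ≠ 1 := by
      intro h
      exact Nat.findGreatest_is_greatest (Nat.lt_succ_self (ψ u))
        (Nat.succ_le_of_lt (hψlt u hu)) h
    exact ⟨h1, by rw [h1]; exact h2⟩
  have hψinj : Set.InjOn ψ {s | mSigma d s = -1 ∧ mSigma d (s + 1) ≠ mSigma d s} := by
    have key2 : ∀ u₁ ∈ {s | mSigma d s = -1 ∧ mSigma d (s + 1) ≠ mSigma d s},
        ∀ u₂ ∈ {s | mSigma d s = -1 ∧ mSigma d (s + 1) ≠ mSigma d s},
        u₁ < u₂ → ψ u₁ ≠ ψ u₂ := by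
      intro u₁ hu₁ u₂ hu₂ hlt heq
      have h1 : mSigma d (u₁ + 1) = 1 := hUm1 u₁ hu₁
      have h2 : ψ u₂ < u₁ + 1 := by
        have := hψlt u₁ hu₁
        omega
      exact Nat.findGreatest_is_greatest h2 (Nat.succ_le_of_lt hlt) h1
    intro x hx y hy hxy
    by_contra hne
    rcases Nat.lt_or_ge x y with h | h
    · exact key2 x hx y hy h hxy
    · exact key2 y hy x hx (lt_of_le_of_ne h (Ne.symm hne)) hxy.symm
  have himgψ : ψ '' {s | mSigma d s = -1 ∧ mSigma d (s + 1) ≠ mSigma d s} ⊆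
      {s | mSigma d s = 1 ∧ mSigma d (s + 1) ≠ mSigma d s} := by
    rintro x ⟨u, hu, rfl⟩
    exact hψD u hu
  have hUfin : ({s | mSigma d s = -1 ∧ mSigma d (s + 1) ≠ mSigma d s} : Set ℕ).Finite :=
    Set.Finite.of_finite_image (hDfin.subset himgψ) hψinj
  have hUcard : ({s | mSigma d s = -1 ∧ mSigma d (s + 1) ≠ mSigma d s} : Set ℕ).ncard ≤ k := by
    rw [← Set.ncard_image_of_injOn hψinj]
    exact (Set.ncard_le_ncard himgψ hDfin).trans hDcard
  -- put everything together
  have hsub : {s | mSigma d (s + 1) ≠ mSigma d s} ⊆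
      {s | mSigma d s = 1 ∧ mSigma d (s + 1) ≠ mSigma d s} ∪
      {s | mSigma d s = -1 ∧ mSigma d (s + 1) ≠ mSigma d s} := by
    intro s hs
    rcases mcases d s with h | h
    · exact Or.inl ⟨h, hs⟩
    · exact Or.inr ⟨h, hs⟩
  have hfin : ({s | mSigma d (s + 1) ≠ mSigma d s} : Set ℕ).Finite :=
    (hDfin.union hUfin).subset hsub
  refine ⟨hfin, ?_⟩
  calc ({s | mSigma d (s + 1) ≠ mSigma d s} : Set ℕ).ncard
      ≤ ({s | mSigma d s = 1 ∧ mSigma d (s + 1) ≠ mSigma d s} ∪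
        {s | mSigma d s = -1 ∧ mSigma d (s + 1) ≠ mSigma d s} : Set ℕ).ncard :=
        Set.ncard_le_ncard hsub (hDfin.union hUfin)
    _ ≤ ({s | mSigma d s = 1 ∧ mSigma d (s + 1) ≠ mSigma d s} : Set ℕ).ncard +
        ({s | mSigma d s = -1 ∧ mSigma d (s + 1) ≠ mSigma d s} : Set ℕ).ncard :=
        Set.ncard_union_le _ _
    _ ≤ k + k := add_le_add hDcard hUcard
    _ = 2 * k := by omega
end

section
/- Let K ⊆ ℕ be the halting set and let H be the fuzzy set defined by H(x) = 1 if x ∈ K and H(x) = 1/2 otherwise. Then H is fuzzy c.e., and moreover, for every Σ⁰₁-approximation h of H with h(x,0) = 0 for all x, the set {x ∈ ℕ : |{s : h(x,s+1) ≠ h(x,s)}| ≥ 2} is infinite. -/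
open Filter

/-! The approximation that equals `1` once the diagonal computation on `x` has halted within
`s` steps, and `1/2` before, shows that `H` is c.e. Conversely, an approximation starting at `0`
that changes at most once on input `x` reaches its limit in a single jump, so for such `x` we
have `x ∉ K` iff `h x s = 1/2` for some `s`. If this held for all but finitely many `x`, the
complement of `K` would be c.e., which the diagonal argument rules out. -/

open Nat.Partrec (Code)
open Nat.Partrec.Code

section Computability

variable {α : Type*} [Primcodable α]

theorem Set.Finite.computablePred [DecidableEq α] {s : Set α} (hs : s.Finite) :
    ComputablePred (· ∈ s) :=
  ((Primrec.eq.exists_mem_list.comp (Primrec.const hs.toFinset.toList) Primrec.id).of_eq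
    fun a => by simp).computablePred

theorem REPred.ite {c p q : α → Prop} [DecidablePred c] (hc : ComputablePred c)
    (hp : REPred p) (hq : REPred q) : REPred fun a => if c a then p a else q a :=
  (Partrec.cond hc.decide hp hq).of_eq fun a => by
    dsimp only
    by_cases h : c a
    · rw [if_pos h, decide_eq_true h, cond_true]
    · rw [if_neg h, decide_eq_false h, cond_false]

theorem REPred.of_finite_not_iff [DecidableEq α] {p q : α → Prop} (hp : REPred p)
    (hpq : {a | ¬(p a ↔ q a)}.Finite) : REPred q := by
  classical
  -- off the finite set `D` where they disagree, `q` is `p`; on `D` it is the finite set `D ∩ q`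
  have hd : {a | ¬(p a ↔ q a) ∧ q a}.Finite := hpq.subset fun _ => And.left
  refine (REPred.ite hpq.computablePred hd.computablePred.to_re hp).of_eq fun a => ?_
  by_cases h : p a ↔ q a <;> simp [h]

theorem REPred.exists_nat {p : α → ℕ → Prop} (hp : ComputablePred fun x : α × ℕ => p x.1 x.2) :
    REPred fun a => ∃ n, p a n := by
  obtain ⟨_, hp⟩ := hp
  refine (Partrec.rfind hp.to₂.partrec₂).dom_re.of_eq fun a => ?_
  simp [Nat.rfind_dom]

end Computability

theorem diagonal_halting_problem_not_re :
    ¬REPred fun n : ℕ => ¬((Denumerable.ofNat Code n).eval n).Dom := by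
  intro h
  obtain ⟨c, hc⟩ := exists_code.1 (Partrec.nat_iff.1 (h.map (Computable.const 0).to₂))
  have := congrArg Part.Dom (congrFun hc (Encodable.encode c))
  simp [Part.assert, Denumerable.ofNat_encode] at this

section ChangeSet

variable {α : Type*} {g : ℕ → α}

theorem apply_eq_of_forall_succ_eq {m n : ℕ} (hmn : m ≤ n)
    (h : ∀ j, m ≤ j → j < n → g (j + 1) = g j) : g n = g m := by
  induction n, hmn using Nat.le_induction with
  | base => rfl
  | succ n hmn ih => rw [h n hmn n.lt_succ_self, ih fun j hj hjn => h j hj (by omega)]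

theorem apply_eq_of_ne_apply_zero (hg : {s | g (s + 1) ≠ g s}.Subsingleton) {s t : ℕ}
    (hs : g s ≠ g 0) (hst : s ≤ t) : g t = g s := by
  obtain ⟨i, his, hi⟩ : ∃ i < s, g (i + 1) ≠ g i := by
    by_contra! h
    exact hs (apply_eq_of_forall_succ_eq s.zero_le fun j _ hj => h j hj)
  refine apply_eq_of_forall_succ_eq hst fun j hsj _ => ?_
  by_contra hj
  exact absurd (hg hj hi) (by omega)

theorem exists_forall_ge_apply_eq (hg : {s | g (s + 1) ≠ g s}.Subsingleton) :
    ∃ N, ∀ t ≥ N, g t = g N := by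
  by_cases h : ∃ s, g s ≠ g 0
  · obtain ⟨s, hs⟩ := h
    exact ⟨s, fun t => apply_eq_of_ne_apply_zero hg hs⟩
  · push Not at h
    exact ⟨0, fun t _ => h t⟩

theorem exists_apply_eq_iff_of_tendsto [TopologicalSpace α] [T2Space α] {L q : α}
    (hg : {s | g (s + 1) ≠ g s}.Subsingleton) (hL : Tendsto g atTop (nhds L)) (hq : q ≠ g 0) :
    (∃ s, g s = q) ↔ L = q := by
  have lim_eq : ∀ N, (∀ t ≥ N, g t = g N) → L = g N := fun N hN =>
    tendsto_nhds_unique hL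
      (tendsto_const_nhds.congr' (eventually_atTop.2 ⟨N, fun t ht => (hN t ht).symm⟩))
  constructor
  · rintro ⟨s, rfl⟩
    exact lim_eq s fun t => apply_eq_of_ne_apply_zero hg hq
  · rintro rfl
    obtain ⟨N, hN⟩ := exists_forall_ge_apply_eq hg
    exact ⟨N, (lim_eq N hN).symm⟩

end ChangeSet

theorem rePred_not_of_approx_of_finite_multiple_changes {P : ℕ → Prop} [DecidablePred P]
    {h : ℕ → ℕ → ℚ} (hh : Computable₂ h) (h0 : ∀ x, h x 0 = 0)
    (hlim : ∀ x, Tendsto (fun s => (h x s : ℝ)) atTop (nhds (if P x then 1 else 1 / 2)))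
    (hfin : {x | {s | h x (s + 1) ≠ h x s}.Nontrivial}.Finite) :
    REPred fun x => ¬P x := by
  have hhalf : REPred fun x => ∃ s, h x s = 1 / 2 :=
    REPred.exists_nat (Primrec.eq.decide.to_comp.comp hh (Computable.const _)).computablePred
  refine hhalf.of_finite_not_iff (hfin.subset fun x hx => ?_)
  by_contra hsub
  refine hx ?_
  have hsub' : {s | (h x (s + 1) : ℝ) ≠ h x s}.Subsingleton := by
    simpa [Rat.cast_inj] using Set.not_nontrivial_iff.1 hsub
  have key : (∃ s, (h x s : ℝ) = ((1 / 2 : ℚ) : ℝ)) ↔ ¬P x := by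
    rw [exists_apply_eq_iff_of_tendsto hsub' (hlim x) (by simp [h0])]
    split_ifs with hP <;> norm_num [hP]
  simpa only [Rat.cast_inj] using key

theorem sigmaApprox_cond_of_monotone {P : ℕ → Prop} [DecidablePred P] {b : ℕ → ℕ → Bool}
    (hb : Computable₂ b) (hmono : ∀ x, Monotone (b x)) (hP : ∀ x, P x ↔ ∃ s, b x s = true) :
    SigmaApprox (fun x s => bif b x s then 1 else 1 / 2) fun x => if P x then 1 else 1 / 2 := by
  refine ⟨(hb.cond (Computable.const _) (Computable.const _)).to₂, fun x s => ?_,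
    fun x s => ?_, fun x => ?_⟩
  · dsimp only
    cases b x s <;> norm_num
  · dsimp only
    have hle : b x s ≤ b x (s + 1) := hmono x s.le_succ
    revert hle
    cases b x s <;> cases b x (s + 1) <;> norm_num
  · by_cases hx : P x
    · obtain ⟨s₀, hs₀⟩ := (hP x).1 hx
      refine tendsto_const_nhds.congr' (eventually_atTop.2 ⟨s₀, fun s hs => ?_⟩)
      have : b x s = true := Bool.eq_true_of_true_le (hs₀ ▸ hmono x hs)
      simp [hx, this]
    · have : ∀ s, b x s = false := fun s => Bool.eq_false_iff.2 fun hs => hx ((hP x).2 ⟨s, hs⟩)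
      simp [hx, this]

open Classical in
theorem fuzzyCE_diagonal_halting :
    FuzzyCE (fun x => if ((Denumerable.ofNat Code x).eval x).Dom then (1 : ℝ) else 1 / 2) := by
  refine ⟨_, sigmaApprox_cond_of_monotone
    (b := fun x s => (evaln s (Denumerable.ofNat Code x) x).isSome) ?_ (fun x s t hst => ?_)
    fun x => ?_⟩
  · exact (Primrec.option_isSome.comp (primrec_evaln.comp
      ((Primrec.snd.pair ((Primrec.ofNat Code).comp Primrec.fst)).pair Primrec.fst))).to_comp
  · simp only [Bool.le_iff_imp, Option.isSome_iff_exists]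
    exact fun ⟨v, hv⟩ => ⟨v, evaln_mono hst hv⟩
  · simp only [Option.isSome_iff_exists, Part.dom_iff_mem, evaln_complete, Option.mem_def]
    exact exists_comm

open Classical in
/-- Harkleroad's example: the fuzzy set `H` with `H x = 1` if the `x`-th partial
computable function halts on input `x`, and `H x = 1/2` otherwise, is fuzzy c.e.,
but every Σ⁰₁-approximation of `H` starting at `0` needs at least two updates on
infinitely many inputs. -/
theorem harkleroad_example :
    FuzzyCE (fun x => if ((Denumerable.ofNat Nat.Partrec.Code x).eval x).Dom
        then (1 : ℝ) else 1 / 2) ∧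
    ∀ h : ℕ → ℕ → ℚ,
      SigmaApprox h (fun x => if ((Denumerable.ofNat Nat.Partrec.Code x).eval x).Dom
        then (1 : ℝ) else 1 / 2) →
      (∀ x, h x 0 = 0) →
      {x | {s | h x (s + 1) ≠ h x s}.Nontrivial}.Infinite := by
  refine ⟨fuzzyCE_diagonal_halting, fun h ⟨hcomp, _, _, hlim⟩ h0 hfin => ?_⟩
  exact diagonal_halting_problem_not_re
    (rePred_not_of_approx_of_finite_multiple_changes hcomp h0 hlim hfin)
end
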